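/- arXiv:1111.6845 — 9 statements merged into one kernel-verified Lean document; each statement's English description precedes it below -/
import Mathlib

section
/- Let G = (V,E) be a decomposable (chordal) graph on p vertices, and let σ be an ordering of V which is a perfect vertex elimination scheme for G. Then for any p×p real positive definite matrix Σ with modified Cholesky decomposition Σ = LDLᵀ, one has L ∈ 𝓛_{G_σ} if and only if Σ ∈ P_{G_σ}. -/
open Matrix BigOperators

/-- The closed neighborhood `N[v]` of a vertex `v`. -/
def cNbhd {V : Type*} (G : SimpleGraph V) (v : V) : Set V :=
  {u | u = v ∨ G.Adj u v}

/-- A graph is homogeneous (co-chordal) if for every edge `(v,v')`, the closed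
neighborhoods are nested. -/
def Homogeneous {V : Type*} (G : SimpleGraph V) : Prop :=
  ∀ v v' : V, G.Adj v v' → cNbhd G v' ⊆ cNbhd G v ∨ cNbhd G v ⊆ cNbhd G v'

/-- `σ` is a Hasse tree based elimination scheme: whenever `u → v`
(`N[v] ⊆ N[u]`) and `N[u] ≠ N[v]`, one has `σ(u) > σ(v)`. -/
def HasseElimScheme {V : Type*} {p : ℕ} (G : SimpleGraph V) (σ : V ≃ Fin p) : Prop :=
  ∀ u v : V, cNbhd G v ⊆ cNbhd G u → cNbhd G u ≠ cNbhd G v → σ v < σ u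

/-- `σ` is a perfect vertex elimination scheme for `G`. -/
def PerfectElimScheme {V : Type*} {p : ℕ} (G : SimpleGraph V) (σ : V ≃ Fin p) : Prop :=
  ∀ i j k : Fin p, i < j → j < k →
    G.Adj (σ.symm j) (σ.symm i) → G.Adj (σ.symm k) (σ.symm i) →
      G.Adj (σ.symm k) (σ.symm j)

/-- `G` has an induced cycle on at least `4` vertices. -/
def HasInducedCycleGE4 {V : Type*} (G : SimpleGraph V) : Prop :=
  ∃ (n : ℕ) (f : Fin n → V), 4 ≤ n ∧ Function.Injective f ∧
    ∀ i j : Fin n, G.Adj (f i) (f j) ↔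
      (((i : ℕ) + 1) % n = (j : ℕ) ∨ ((j : ℕ) + 1) % n = (i : ℕ))

/-- A graph is decomposable (chordal) if it has no induced cycle of length `≥ 4`. -/
def Decomposable {V : Type*} (G : SimpleGraph V) : Prop := ¬ HasInducedCycleGE4 G

/-- `G` has an induced path on `4` vertices. -/
def HasInducedPath4 {V : Type*} (G : SimpleGraph V) : Prop :=
  ∃ a b c d : V, a ≠ b ∧ a ≠ c ∧ a ≠ d ∧ b ≠ c ∧ b ≠ d ∧ c ≠ d ∧
    G.Adj a b ∧ G.Adj b c ∧ G.Adj c d ∧ ¬ G.Adj a c ∧ ¬ G.Adj a d ∧ ¬ G.Adj b d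

/-- `G` has an induced cycle on `4` vertices. -/
def HasInducedCycle4 {V : Type*} (G : SimpleGraph V) : Prop :=
  ∃ a b c d : V, a ≠ b ∧ a ≠ c ∧ a ≠ d ∧ b ≠ c ∧ b ≠ d ∧ c ≠ d ∧
    G.Adj a b ∧ G.Adj b c ∧ G.Adj c d ∧ G.Adj d a ∧ ¬ G.Adj a c ∧ ¬ G.Adj b d

/-- `C` is a maximal clique of `G`. -/
def IsMaxClique {V : Type*} (G : SimpleGraph V) (C : Finset V) : Prop :=
  G.IsClique (C : Set V) ∧
    ∀ C' : Finset V, G.IsClique (C' : Set V) → C ⊆ C' → C = C'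

/-- Membership in the class `𝓛_{G_σ}`: unit diagonal, and `L i j = 0` whenever
`i < j` or the corresponding vertices are not adjacent. -/
def memL {V : Type*} {p : ℕ} (G : SimpleGraph V) (σ : V ≃ Fin p)
    (L : Matrix (Fin p) (Fin p) ℝ) : Prop :=
  (∀ i, L i i = 1) ∧
    ∀ i j : Fin p, i ≠ j → (i < j ∨ ¬ G.Adj (σ.symm i) (σ.symm j)) → L i j = 0

/-- Membership in the class `P_{G_σ}`: positive definite, with `A i j = 0` whenever
the corresponding vertices are distinct and not adjacent. -/
def memP {V : Type*} {p : ℕ} (G : SimpleGraph V) (σ : V ≃ Fin p)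
    (A : Matrix (Fin p) (Fin p) ℝ) : Prop :=
  A.PosDef ∧ ∀ i j : Fin p, i ≠ j → ¬ G.Adj (σ.symm i) (σ.symm j) → A i j = 0

/-- Lower triangular with unit diagonal. -/
def LowerUnitri {p : ℕ} (L : Matrix (Fin p) (Fin p) ℝ) : Prop :=
  (∀ i, L i i = 1) ∧ ∀ i j : Fin p, i < j → L i j = 0

/-- Diagonal matrix with positive diagonal entries. -/
def PosDiag {p : ℕ} (D : Matrix (Fin p) (Fin p) ℝ) : Prop :=
  (∀ i j : Fin p, i ≠ j → D i j = 0) ∧ ∀ i, 0 < D i i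

/-- Determinant of the principal submatrix of `A` with rows and columns in `S`. -/
noncomputable def principalDet {p : ℕ} (A : Matrix (Fin p) (Fin p) ℝ)
    (S : Finset (Fin p)) : ℝ :=
  (A.submatrix (fun x : S => (x : Fin p)) (fun x : S => (x : Fin p))).det

/-! The classes `𝓛_{G_σ}` and `P_{G_σ}` are linked through the entries
`(L D Lᵀ)ᵢⱼ = ∑ₖ Lᵢₖ Dₖₖ Lⱼₖ`. If `L ∈ 𝓛_{G_σ}`, a nonzero term needs `k ≤ i, j` with `k`
adjacent (or equal) to both, and the perfect elimination property then makes `i, j` adjacent.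
Conversely, for `j < i` the entry `Aᵢⱼ` is `Lᵢⱼ Dⱼⱼ` plus terms with `k < j`; by strong induction
on `j` those vanish at a non-edge `(i, j)`, again by the perfect elimination property, so
`Aᵢⱼ = 0` forces `Lᵢⱼ = 0`. -/

theorem mul_diag_mul_transpose_apply {n R : Type*} [Fintype n] [CommSemiring R]
    (L D : Matrix n n R) (hD : ∀ i j, i ≠ j → D i j = 0) (i j : n) :
    (L * D * Lᵀ) i j = ∑ k, L i k * D k k * L j k := by
  simp only [mul_apply, transpose_apply]
  refine Finset.sum_congr rfl fun k _ => ?_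
  rw [Finset.sum_eq_single k (fun m _ hmk => by rw [hD m k hmk, mul_zero]) (by simp)]

section

variable {V : Type*} {p : ℕ} {G : SimpleGraph V} {σ : V ≃ Fin p}

theorem memL.lt_and_adj_of_ne_zero {L : Matrix (Fin p) (Fin p) ℝ} (hL : memL G σ L)
    {i j : Fin p} (hij : i ≠ j) (hLij : L i j ≠ 0) :
    j < i ∧ G.Adj (σ.symm i) (σ.symm j) := by
  by_contra h
  rw [not_and_or, not_lt] at h
  exact hLij (hL.2 i j hij (h.imp (lt_of_le_of_ne · hij) id))

theorem PerfectElimScheme.adj_of_adj_common_lower (hσ : PerfectElimScheme G σ)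
    {i j k : Fin p} (hij : i ≠ j) (hki : k < i) (hkj : k < j)
    (hik : G.Adj (σ.symm i) (σ.symm k)) (hjk : G.Adj (σ.symm j) (σ.symm k)) :
    G.Adj (σ.symm i) (σ.symm j) := by
  rcases lt_or_gt_of_ne hij with h | h
  · exact (hσ k i j hki h hik hjk).symm
  · exact hσ k j i hkj h hjk hik

theorem PerfectElimScheme.mul_diag_mul_transpose_apply_eq_zero (hσ : PerfectElimScheme G σ)
    {L D : Matrix (Fin p) (Fin p) ℝ} (hL : memL G σ L) (hD : ∀ i j, i ≠ j → D i j = 0)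
    {i j : Fin p} (hij : i ≠ j) (hadj : ¬ G.Adj (σ.symm i) (σ.symm j)) :
    (L * D * Lᵀ) i j = 0 := by
  rw [mul_diag_mul_transpose_apply L D hD]
  refine Finset.sum_eq_zero fun k _ => ?_
  by_cases hLik : L i k = 0
  · simp [hLik]
  by_cases hLjk : L j k = 0
  · simp [hLjk]
  exfalso
  rcases eq_or_ne i k with rfl | hik
  · exact hadj (hL.lt_and_adj_of_ne_zero hij.symm hLjk).2.symm
  rcases eq_or_ne j k with rfl | hjk
  · exact hadj (hL.lt_and_adj_of_ne_zero hij hLik).2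
  obtain ⟨hki, hadji⟩ := hL.lt_and_adj_of_ne_zero hik hLik
  obtain ⟨hkj, hadjj⟩ := hL.lt_and_adj_of_ne_zero hjk hLjk
  exact hadj (hσ.adj_of_adj_common_lower hij hki hkj hadji hadjj)

theorem PerfectElimScheme.apply_eq_zero_of_mul_diag_mul_transpose_apply_eq_zero
    (hσ : PerfectElimScheme G σ)
    {L D : Matrix (Fin p) (Fin p) ℝ} (hL : LowerUnitri L) (hD : PosDiag D)
    (hA : ∀ i j, i ≠ j → ¬ G.Adj (σ.symm i) (σ.symm j) → (L * D * Lᵀ) i j = 0)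
    (j : Fin p) : ∀ i, j < i → ¬ G.Adj (σ.symm i) (σ.symm j) → L i j = 0 := by
  induction j using WellFoundedLT.induction with
  | ind j ih =>
  intro i hji hadj
  have hAij := hA i j hji.ne' hadj
  rw [mul_diag_mul_transpose_apply L D hD.1, Finset.sum_eq_single j ?_ (by simp),
    hL.1 j, mul_one] at hAij
  · exact (mul_eq_zero.mp hAij).resolve_right (hD.2 j).ne'
  intro k _ hkj
  rcases lt_or_gt_of_ne hkj with hkj | hjk
  · by_cases hik : G.Adj (σ.symm i) (σ.symm k)
    · have hjk : ¬ G.Adj (σ.symm j) (σ.symm k) :=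
        fun hjk => hadj (hσ.adj_of_adj_common_lower hji.ne' (hkj.trans hji) hkj hik hjk)
      rw [ih k hkj j hkj hjk, mul_zero]
    · rw [ih k hkj i (hkj.trans hji) hik, zero_mul, zero_mul]
  · rw [hL.2 j k hjk, mul_zero]

end

theorem statement2_general {V : Type*} {p : ℕ} (G : SimpleGraph V) (σ : V ≃ Fin p)
    (hσ : PerfectElimScheme G σ)
    (A L D : Matrix (Fin p) (Fin p) ℝ) (hA : A.PosDef)
    (hL : LowerUnitri L) (hD : PosDiag D) (hdec : A = L * D * Lᵀ) :
    memL G σ L ↔ memP G σ A := by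
  subst hdec
  refine ⟨fun hmemL => ⟨hA, fun i j hij hadj => ?_⟩, fun hmemP => ⟨hL.1, fun i j hij h => ?_⟩⟩
  · exact hσ.mul_diag_mul_transpose_apply_eq_zero hmemL hD.1 hij hadj
  rcases lt_or_gt_of_ne hij with hlt | hgt
  · exact hL.2 i j hlt
  · exact hσ.apply_eq_zero_of_mul_diag_mul_transpose_apply_eq_zero hL hD hmemP.2 j i hgt
      (h.resolve_left hgt.not_gt)

/-- Paulsen et al.: for a decomposable graph with a perfect vertex elimination scheme,
zeros are preserved between `Σ` and its Cholesky factor `L`. -/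
theorem statement2 {V : Type*} [Fintype V] {p : ℕ} (G : SimpleGraph V) (σ : V ≃ Fin p)
    (hG : Decomposable G) (hσ : PerfectElimScheme G σ)
    (A L D : Matrix (Fin p) (Fin p) ℝ) (hA : A.PosDef)
    (hL : LowerUnitri L) (hD : PosDiag D) (hdec : A = L * D * Lᵀ) :
    memL G σ L ↔ memP G σ A :=
  statement2_general G σ hσ A L D hA hL hD hdec
end

section
/- Let G = (V,E) be a finite simple graph on p vertices and σ an ordering of V. Suppose that for every p×p diagonal matrix D with positive diagonal entries and every p×p lower triangular matrix L with unit diagonal, L ∈ 𝓛_{G_σ} if and only if LDLᵀ ∈ P_{G_σ}. Then G is a decomposable (chordal) graph and σ is a perfect vertex elimination scheme for G. -/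
open Matrix BigOperators

/-!
If `j, k > i` are both neighbours of `i`, the unit lower triangular matrix `L = 1 + E_{ji} + E_{ki}`
lies in `𝓛_{G_σ}`, yet `(L Lᵀ)_{kj} = 1`; so zero preservation forces `j ~ k`, i.e. `σ` is a perfect
elimination scheme. An induced cycle of length `≥ 4` is then impossible: its vertex eliminated
first has two non-adjacent cycle neighbours, both eliminated later.
-/

section

variable {V : Type*} {p : ℕ} {G : SimpleGraph V} {σ : V ≃ Fin p}

open Fin.CommRing in
lemma exists_nonadj_neighbors_of_induced_cycle {n : ℕ} (hn : 4 ≤ n) {f : Fin n → V}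
    (hf : ∀ i j : Fin n, G.Adj (f i) (f j) ↔
      (((i : ℕ) + 1) % n = (j : ℕ) ∨ ((j : ℕ) + 1) % n = (i : ℕ)))
    (i : Fin n) :
    ∃ j k : Fin n, j ≠ k ∧ G.Adj (f j) (f i) ∧ G.Adj (f k) (f i) ∧ ¬ G.Adj (f j) (f k) := by
  obtain ⟨m, rfl⟩ := Nat.exists_eq_add_of_le' hn
  have hsucc (a b : Fin (m + 4)) : ((a : ℕ) + 1) % (m + 4) = b ↔ a + 1 = b := by
    rw [Fin.ext_iff, Fin.val_add, Fin.val_one]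
  simp only [hsucc] at hf
  refine ⟨i + 1, i - 1, fun h => ?_, (hf _ _).2 (.inr rfl), (hf _ _).2 (.inl (sub_add_cancel i 1)),
    fun h => ?_⟩
  · have h2 : (2 : Fin (m + 4)) = 0 := by linear_combination h
    simp [Fin.ext_iff, Nat.mod_eq_of_lt (show 2 < m + 4 by omega)] at h2
  · rcases (hf _ _).1 h with h | h
    · have h3 : (3 : Fin (m + 4)) = 0 := by linear_combination h
      simp [Fin.ext_iff, Nat.mod_eq_of_lt (show 3 < m + 4 by omega)] at h3
    · have h1 : (1 : Fin (m + 4)) = 0 := by linear_combination -h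
      simp at h1

lemma PerfectElimScheme.adj_of_adj_of_adj (hσ : PerfectElimScheme G σ) {u v w : V} (huv : u ≠ v)
    (hu : G.Adj u w) (hv : G.Adj v w) (hwu : σ w < σ u) (hwv : σ w < σ v) : G.Adj u v := by
  rcases lt_or_gt_of_ne (σ.injective.ne huv) with h | h
  · simpa using (hσ (σ w) (σ u) (σ v) hwu h (by simpa using hu) (by simpa using hv)).symm
  · simpa using hσ (σ w) (σ v) (σ u) hwv h (by simpa using hv) (by simpa using hu)

lemma PerfectElimScheme.decomposable (hσ : PerfectElimScheme G σ) : Decomposable G := by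
  rintro ⟨n, f, hn, hinj, hf⟩
  have : NeZero n := ⟨by omega⟩
  obtain ⟨i, hmin⟩ := Finite.exists_min (fun x => σ (f x))
  obtain ⟨j, k, hjk, hj, hk, hnadj⟩ := exists_nonadj_neighbors_of_induced_cycle hn hf i
  have later {x : Fin n} (hx : G.Adj (f x) (f i)) : σ (f i) < σ (f x) :=
    (hmin x).lt_of_ne (σ.injective.ne hx.ne')
  exact hnadj (hσ.adj_of_adj_of_adj (hinj.ne hjk) hj hk (later hj) (later hk))

lemma posDiag_one : PosDiag (1 : Matrix (Fin p) (Fin p) ℝ) :=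
  ⟨fun _ _ h => one_apply_ne h, fun _ => by simp⟩

section TwoEntryMatrix

variable {i j k : Fin p}

lemma lowerUnitri_one_add_single_add_single (hij : i < j) (hik : i < k) :
    LowerUnitri (1 + single j i 1 + single k i 1 : Matrix (Fin p) (Fin p) ℝ) := by
  refine ⟨fun a => ?_, fun a b hab => ?_⟩
  · simp only [Matrix.add_apply, one_apply_eq, single_apply]
    split_ifs <;> grind
  · simp only [Matrix.add_apply, one_apply_ne hab.ne, single_apply]
    split_ifs <;> grind

lemma memL_one_add_single_add_single (hij : i < j) (hik : i < k)
    (hj : G.Adj (σ.symm j) (σ.symm i)) (hk : G.Adj (σ.symm k) (σ.symm i)) :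
    memL G σ (1 + single j i 1 + single k i 1 : Matrix (Fin p) (Fin p) ℝ) := by
  refine ⟨(lowerUnitri_one_add_single_add_single hij hik).1, fun a b hab hzero => ?_⟩
  simp only [Matrix.add_apply, one_apply_ne hab, single_apply]
  split_ifs <;> grind

lemma one_add_single_add_single_mul_transpose_apply (hij : i ≠ j) (hik : i ≠ k) (hjk : j ≠ k) :
    ((1 + single j i 1 + single k i 1 : Matrix (Fin p) (Fin p) ℝ) *
      (1 + single j i 1 + single k i 1 : Matrix (Fin p) (Fin p) ℝ)ᵀ) k j = 1 := by
  simp [add_mul, mul_add, hij, hik, hjk, hjk.symm]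

end TwoEntryMatrix

lemma perfectElimScheme_of_memL_imp_memP
    (H : ∀ L : Matrix (Fin p) (Fin p) ℝ, LowerUnitri L → memL G σ L → memP G σ (L * Lᵀ)) :
    PerfectElimScheme G σ := by
  intro i j k hij hjk hj hk
  by_contra hkj
  have hik := hij.trans hjk
  have hzero := (H _ (lowerUnitri_one_add_single_add_single hij hik)
    (memL_one_add_single_add_single hij hik hj hk)).2 k j hjk.ne' hkj
  rw [one_add_single_add_single_mul_transpose_apply hij.ne hik.ne hjk.ne] at hzero
  exact one_ne_zero hzero

end

theorem statement3_general {V : Type*} {p : ℕ} (G : SimpleGraph V) (σ : V ≃ Fin p)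
    (H : ∀ D : Matrix (Fin p) (Fin p) ℝ, PosDiag D →
      ∀ L : Matrix (Fin p) (Fin p) ℝ, LowerUnitri L →
        (memL G σ L ↔ memP G σ (L * D * Lᵀ))) :
    Decomposable G ∧ PerfectElimScheme G σ := by
  have hσ : PerfectElimScheme G σ := perfectElimScheme_of_memL_imp_memP fun L hL hLσ => by
    simpa using (H 1 posDiag_one L hL).1 hLσ
  exact ⟨hσ.decomposable, hσ⟩

/-- Converse of the Paulsen et al. result: if zeros are always preserved between
`L` and `LDLᵀ`, then `G` is decomposable and `σ` is a perfect vertex elimination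
scheme. -/
theorem statement3 {V : Type*} [Fintype V] {p : ℕ} (G : SimpleGraph V) (σ : V ≃ Fin p)
    (H : ∀ D : Matrix (Fin p) (Fin p) ℝ, PosDiag D →
      ∀ L : Matrix (Fin p) (Fin p) ℝ, LowerUnitri L →
        (memL G σ L ↔ memP G σ (L * D * Lᵀ))) :
    Decomposable G ∧ PerfectElimScheme G σ :=
  statement3_general G σ H
end

section
/- Let G = (V,E) be a connected homogeneous graph with |V| = m, and let σ be a Hasse tree based elimination scheme for G. Then the vertex σ⁻¹(m) (the vertex with the highest label) lies at the root of the Hasse tree of G; that is, for every vertex v ∈ V, N[v] ⊆ N[σ⁻¹(m)]. In particular, σ⁻¹(m) is adjacent to every other vertex of G. -/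
open Matrix BigOperators

/-! Since `σ u` is the largest label, `N[u]` is inclusion-maximal among closed neighborhoods.
For an edge `a b` with `N[a] ⊆ N[u]`, homogeneity either gives `N[b] ⊆ N[a]`, or `N[a] ⊆ N[b]`,
and then `u ∈ N[a] ⊆ N[b]`, so `N[u]` and `N[b]` are nested and maximality gives `N[b] ⊆ N[u]`.
Thus `N[v] ⊆ N[u]` spreads from `u` along edges to the whole connected graph. -/

theorem self_mem_cNbhd {V : Type*} (G : SimpleGraph V) (v : V) : v ∈ cNbhd G v :=
  Or.inl rfl

theorem mem_cNbhd_comm {V : Type*} {G : SimpleGraph V} {u v : V} :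
    u ∈ cNbhd G v ↔ v ∈ cNbhd G u := by
  simp [cNbhd, eq_comm, G.adj_comm]

theorem SimpleGraph.Reachable.of_forall_adj {V : Type*} {G : SimpleGraph V} {p : V → Prop}
    {a b : V} (hab : G.Reachable a b) (hp : ∀ x y, G.Adj x y → p x → p y) (ha : p a) : p b := by
  rw [G.reachable_iff_reflTransGen] at hab
  induction hab with
  | refl => exact ha
  | tail _ hxy ih => exact hp _ _ hxy ih

theorem HasseElimScheme.cNbhd_subset_of_le {V : Type*} {p : ℕ} {G : SimpleGraph V}
    {σ : V ≃ Fin p} (hσ : HasseElimScheme G σ) {u v : V} (hsub : cNbhd G u ⊆ cNbhd G v)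
    (hle : σ v ≤ σ u) : cNbhd G v ⊆ cNbhd G u := by
  by_contra hne
  exact (hσ v u hsub fun h => hne h.le).not_ge hle

namespace Homogeneous

variable {V : Type*} {G : SimpleGraph V} {u : V}

theorem cNbhd_subset_of_mem (hhom : Homogeneous G)
    (hmax : ∀ b, cNbhd G u ⊆ cNbhd G b → cNbhd G b ⊆ cNbhd G u) {b : V}
    (hb : u ∈ cNbhd G b) : cNbhd G b ⊆ cNbhd G u := by
  obtain rfl | hub := hb
  · exact subset_rfl
  · exact (hhom u b hub).elim id (hmax b)

theorem cNbhd_subset_of_adj (hhom : Homogeneous G)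
    (hmax : ∀ b, cNbhd G u ⊆ cNbhd G b → cNbhd G b ⊆ cNbhd G u) {a b : V}
    (ha : cNbhd G a ⊆ cNbhd G u) (hab : G.Adj a b) : cNbhd G b ⊆ cNbhd G u := by
  obtain hba | hsub := hhom a b hab
  · exact hba.trans ha
  · have hua : u ∈ cNbhd G a := mem_cNbhd_comm.1 (ha (self_mem_cNbhd G a))
    exact hhom.cNbhd_subset_of_mem hmax (hsub hua)

end Homogeneous

theorem statement5_general {V : Type*} {m : ℕ} (G : SimpleGraph V) (σ : V ≃ Fin m)
    (hconn : G.Connected) (hhom : Homogeneous G) (hσ : HasseElimScheme G σ)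
    (u : V) (hu : ∀ v : V, σ v ≤ σ u) :
    (∀ v : V, cNbhd G v ⊆ cNbhd G u) ∧ ∀ v : V, v ≠ u → G.Adj u v := by
  have hmax : ∀ b, cNbhd G u ⊆ cNbhd G b → cNbhd G b ⊆ cNbhd G u :=
    fun b hb => hσ.cNbhd_subset_of_le hb (hu b)
  have hroot : ∀ v, cNbhd G v ⊆ cNbhd G u := fun v =>
    (hconn.preconnected u v).of_forall_adj
      (fun _ _ hab ha => hhom.cNbhd_subset_of_adj hmax ha hab) subset_rfl
  refine ⟨hroot, fun v hv => ?_⟩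
  obtain rfl | hvu := hroot v (self_mem_cNbhd G v)
  · exact absurd rfl hv
  · exact hvu.symm

/-- In a connected homogeneous graph with a Hasse tree based elimination scheme, the
vertex with the highest label lies at the root of the Hasse tree: its closed
neighborhood contains every closed neighborhood, and in particular it is adjacent
to every other vertex. -/
theorem statement5 {V : Type*} [Fintype V] {m : ℕ} (G : SimpleGraph V) (σ : V ≃ Fin m)
    (hconn : G.Connected) (hhom : Homogeneous G) (hσ : HasseElimScheme G σ)
    (u : V) (hu : ∀ v : V, σ v ≤ σ u) :
    (∀ v : V, cNbhd G v ⊆ cNbhd G u) ∧ ∀ v : V, v ≠ u → G.Adj u v :=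
  statement5_general G σ hconn hhom hσ u hu
end

section
/- Let G = (V,E) be a homogeneous graph on p vertices, and let σ be an ordering of V which is a Hasse tree based elimination scheme for G. Then for any p×p real positive definite matrix Σ with modified Cholesky decomposition Σ = LDLᵀ, the following equivalences hold: Σ ∈ P_{G_σ} ⇔ L ∈ 𝓛_{G_σ} ⇔ L⁻¹ ∈ 𝓛_{G_σ}. -/
open Matrix BigOperators

/-!
Transport the graph to `Fin p` along `σ`. Homogeneity together with the Hasse-tree condition
says that along every edge `ij` with `j < i` we have `N[j] ⊆ N[i]`. Consequently, for `k < j < i`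
with `jk` an edge, `ik` is an edge iff `ij` is. In the entry `Σ_{k ≤ j} d_k L_ik L_jk` of
`L D Lᵀ` (for `j < i`, `ij` a non-edge) every term with `k < j` vanishes as soon as column `k`
of `L` has the zero pattern, so an induction over the columns shows that `Σ` and `L` have the
same zeros. In the same way, `L L⁻¹ = 1` and an induction over the rows show that `L⁻¹`
inherits the zeros of `L`; applied to `L⁻¹` this gives the converse.
-/

namespace SimpleGraph

variable {ι : Type*} [LinearOrder ι]

/-- `N[j] ⊆ N[i]` along every edge `ij` with `j < i`. -/
def IsNestedOrdering (H : SimpleGraph ι) : Prop :=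
  ∀ ⦃i j k⦄, j < i → H.Adj i j → H.Adj j k → k ≠ i → H.Adj i k

theorem IsNestedOrdering.adj_of_adj_of_adj {H : SimpleGraph ι} (hH : H.IsNestedOrdering)
    {i j k : ι} (hkj : k < j) (hji : j < i) (hik : H.Adj i k) (hjk : H.Adj j k) :
    H.Adj i j :=
  hH (hkj.trans hji) hik hjk.symm hji.ne

end SimpleGraph

theorem isNestedOrdering_comap {V : Type*} {p : ℕ} {G : SimpleGraph V} {σ : V ≃ Fin p}
    (hhom : Homogeneous G) (hσ : HasseElimScheme G σ) :
    (G.comap σ.symm).IsNestedOrdering := by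
  intro i j k hji hij hjk hki
  have hsub : cNbhd G (σ.symm j) ⊆ cNbhd G (σ.symm i) := by
    rcases hhom _ _ hij with hs | hs
    · exact hs
    · by_contra hne
      have := hσ _ _ hs fun h => hne (h ▸ subset_rfl)
      simp only [Equiv.apply_symm_apply] at this
      exact hji.not_gt this
  rcases hsub (Or.inr hjk.symm) with h | h
  · exact absurd (σ.symm.injective h) hki
  · exact h.symm

namespace Matrix

variable {ι R : Type*} [LinearOrder ι] [CommRing R] {H : SimpleGraph ι}

def IsLowerUnitriangular (L : Matrix ι ι R) : Prop :=
  (∀ i, L i i = 1) ∧ L.IsLowerTriangular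

def StrictLowerSupportedOn (H : SimpleGraph ι) (L : Matrix ι ι R) : Prop :=
  ∀ ⦃i j⦄, j < i → ¬ H.Adj i j → L i j = 0

def OffDiagSupportedOn (H : SimpleGraph ι) (A : Matrix ι ι R) : Prop :=
  ∀ ⦃i j⦄, i ≠ j → ¬ H.Adj i j → A i j = 0

/-- Up to the factor `d k` this is the `k`-th term of `(L D Lᵀ) i j`; that it involves only
column `k` of `L` is what drives the induction over the columns. -/
theorem mul_eq_zero_of_lt_of_not_adj (hH : H.IsNestedOrdering) {L : Matrix ι ι R} {i j k : ι}
    (hcol : ∀ ⦃l⦄, k < l → ¬ H.Adj l k → L l k = 0) (hkj : k < j) (hji : j < i)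
    (hij : ¬ H.Adj i j) : L i k * L j k = 0 := by
  by_cases hjk : H.Adj j k
  · have hik : ¬ H.Adj i k := fun hik => hij (hH.adj_of_adj_of_adj hkj hji hik hjk)
    rw [hcol (hkj.trans hji) hik, zero_mul]
  · rw [hcol hkj hjk, mul_zero]

variable [Fintype ι]

theorem mul_diagonal_mul_transpose_apply (L : Matrix ι ι R) (d : ι → R) (i j : ι) :
    (L * diagonal d * Lᵀ) i j = ∑ k, d k * (L i k * L j k) := by
  rw [mul_apply]
  simp only [mul_diagonal, transpose_apply]
  exact Finset.sum_congr rfl fun k _ => by ring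

theorem IsLowerUnitriangular.det_eq_one {L : Matrix ι ι R} (hL : L.IsLowerUnitriangular) :
    L.det = 1 := by
  simp [det_of_isLowerTriangular L hL.2, hL.1]

theorem IsLowerUnitriangular.isUnit_det {L : Matrix ι ι R} (hL : L.IsLowerUnitriangular) :
    IsUnit L.det :=
  hL.det_eq_one ▸ isUnit_one

theorem IsLowerUnitriangular.inv {L : Matrix ι ι R} (hL : L.IsLowerUnitriangular) :
    L⁻¹.IsLowerUnitriangular := by
  have := L.invertibleOfIsUnitDet hL.isUnit_det
  have htri : L⁻¹.IsLowerTriangular := blockTriangular_inv_of_blockTriangular hL.2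
  refine ⟨fun i => ?_, htri⟩
  have hii : (L⁻¹ * L) i i = 1 := by rw [nonsing_inv_mul L hL.isUnit_det, one_apply_eq]
  rwa [mul_apply, Finset.sum_eq_single_of_mem i (Finset.mem_univ i), hL.1, mul_one] at hii
  intro k _ hki
  rcases hki.lt_or_gt with hk | hk
  · rw [hL.2 hk, mul_zero]
  · rw [htri hk, zero_mul]

theorem offDiagSupportedOn_mul_diagonal_mul_transpose (hH : H.IsNestedOrdering)
    {L : Matrix ι ι R} (hL : L.IsLowerTriangular) (hLH : L.StrictLowerSupportedOn H)
    (d : ι → R) : (L * diagonal d * Lᵀ).OffDiagSupportedOn H := by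
  suffices hlower : ∀ ⦃i j⦄, j < i → ¬ H.Adj i j → (L * diagonal d * Lᵀ) i j = 0 by
    intro i j hne hij
    rcases hne.lt_or_gt with h | h
    · rw [mul_diagonal_mul_transpose_apply]
      simp only [mul_comm (L i _)]
      rw [← mul_diagonal_mul_transpose_apply]
      exact hlower h fun hji => hij hji.symm
    · exact hlower h hij
  intro i j hji hij
  rw [mul_diagonal_mul_transpose_apply]
  refine Finset.sum_eq_zero fun k _ => mul_eq_zero_of_right _ ?_
  rcases lt_trichotomy k j with hkj | rfl | hjk
  · exact mul_eq_zero_of_lt_of_not_adj hH (fun _ hl hlk => hLH hl hlk) hkj hji hij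
  · rw [hLH hji hij, zero_mul]
  · rw [hL hjk, mul_zero]

theorem strictLowerSupportedOn_of_offDiagSupportedOn [NoZeroDivisors R]
    (hH : H.IsNestedOrdering) {L : Matrix ι ι R} (hL : L.IsLowerUnitriangular) {d : ι → R}
    (hd : ∀ i, d i ≠ 0) (hA : (L * diagonal d * Lᵀ).OffDiagSupportedOn H) :
    L.StrictLowerSupportedOn H := by
  intro i j
  induction j using WellFoundedLT.induction generalizing i with
  | ind j ih =>
    intro hji hij
    have hentry : (L * diagonal d * Lᵀ) i j = d j * L i j := by
      rw [mul_diagonal_mul_transpose_apply,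
        Finset.sum_eq_single_of_mem j (Finset.mem_univ j), hL.1, mul_one]
      intro k _ hkj
      rcases hkj.lt_or_gt with hkj | hjk
      · rw [mul_eq_zero_of_lt_of_not_adj hH (fun _ hl hlk => ih k hkj hl hlk) hkj hji hij,
          mul_zero]
      · rw [hL.2 hjk, mul_zero, mul_zero]
    rw [hA hji.ne' hij] at hentry
    exact (mul_eq_zero.mp hentry.symm).resolve_left (hd j)

theorem offDiagSupportedOn_iff [NoZeroDivisors R] (hH : H.IsNestedOrdering)
    {L : Matrix ι ι R} (hL : L.IsLowerUnitriangular) {d : ι → R} (hd : ∀ i, d i ≠ 0) :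
    (L * diagonal d * Lᵀ).OffDiagSupportedOn H ↔ L.StrictLowerSupportedOn H :=
  ⟨strictLowerSupportedOn_of_offDiagSupportedOn hH hL hd,
    fun hLH => offDiagSupportedOn_mul_diagonal_mul_transpose hH hL.2 hLH d⟩

theorem StrictLowerSupportedOn.inv (hH : H.IsNestedOrdering) {L : Matrix ι ι R}
    (hL : L.IsLowerUnitriangular) (hLH : L.StrictLowerSupportedOn H) :
    L⁻¹.StrictLowerSupportedOn H := by
  have hinv := hL.inv
  intro i
  induction i using WellFoundedLT.induction with
  | ind i ih =>
    intro j hji hij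
    have hentry : (L * L⁻¹) i j = L⁻¹ i j := by
      rw [mul_apply, Finset.sum_eq_single_of_mem i (Finset.mem_univ i), hL.1, one_mul]
      intro k _ hki
      rcases hki.lt_or_gt with hki | hik
      · rcases lt_trichotomy k j with hkj | rfl | hjk
        · rw [hinv.2 hkj, mul_zero]
        · rw [hLH hki hij, zero_mul]
        · by_cases hik : H.Adj i k
          · have hkj : ¬ H.Adj k j := fun hkj => hij (hH hki hik hkj hji.ne)
            rw [ih k hki hjk hkj, mul_zero]
          · rw [hLH hki hik, zero_mul]
      · rw [hL.2 hik, zero_mul]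
    rw [← hentry, mul_nonsing_inv L hL.isUnit_det, one_apply_ne hji.ne']

theorem strictLowerSupportedOn_inv_iff (hH : H.IsNestedOrdering) {L : Matrix ι ι R}
    (hL : L.IsLowerUnitriangular) :
    L⁻¹.StrictLowerSupportedOn H ↔ L.StrictLowerSupportedOn H := by
  refine ⟨fun h => ?_, StrictLowerSupportedOn.inv hH hL⟩
  simpa only [nonsing_inv_nonsing_inv L hL.isUnit_det] using h.inv hH hL.inv

end Matrix

section GraphPatterns

variable {V : Type*} {p : ℕ} {G : SimpleGraph V} {σ : V ≃ Fin p}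

theorem memP_iff_offDiagSupportedOn {A : Matrix (Fin p) (Fin p) ℝ} (hA : A.PosDef) :
    memP G σ A ↔ A.OffDiagSupportedOn (G.comap σ.symm) :=
  and_iff_right hA

theorem memL_iff_strictLowerSupportedOn {L : Matrix (Fin p) (Fin p) ℝ}
    (hL : L.IsLowerUnitriangular) :
    memL G σ L ↔ L.StrictLowerSupportedOn (G.comap σ.symm) := by
  refine ⟨fun h i j hji hij => h.2 i j hji.ne' (Or.inr hij), fun h => ⟨hL.1, ?_⟩⟩
  rintro i j hne (hij | hij)
  · exact hL.2 hij
  · rcases hne.lt_or_gt with hlt | hgt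
    · exact hL.2 hlt
    · exact h hgt hij

end GraphPatterns

theorem statement6_general {V : Type*} {p : ℕ} (G : SimpleGraph V) (σ : V ≃ Fin p)
    (hhom : Homogeneous G) (hσ : HasseElimScheme G σ)
    (A L D : Matrix (Fin p) (Fin p) ℝ) (hA : A.PosDef)
    (hL : LowerUnitri L) (hD : PosDiag D) (hdec : A = L * D * Lᵀ) :
    (memP G σ A ↔ memL G σ L) ∧ (memL G σ L ↔ memL G σ L⁻¹) := by
  have hH := isNestedOrdering_comap hhom hσ
  have hLu : L.IsLowerUnitriangular := ⟨hL.1, fun i j h => hL.2 i j h⟩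
  have hDdiag : D = diagonal D.diag :=
    (IsDiag.diagonal_diag fun i j h => hD.1 i j h).symm
  rw [memP_iff_offDiagSupportedOn hA, memL_iff_strictLowerSupportedOn hLu,
    memL_iff_strictLowerSupportedOn hLu.inv, strictLowerSupportedOn_inv_iff hH hLu, hdec, hDdiag,
    offDiagSupportedOn_iff hH hLu (d := D.diag) fun i => (hD.2 i).ne']
  exact ⟨Iff.rfl, Iff.rfl⟩

/-- Khare–Rajaratnam: for a homogeneous graph with a Hasse tree based elimination
scheme, zeros are preserved between `Σ`, its Cholesky factor `L`, and `L⁻¹`. -/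
theorem statement6 {V : Type*} [Fintype V] {p : ℕ} (G : SimpleGraph V) (σ : V ≃ Fin p)
    (hhom : Homogeneous G) (hσ : HasseElimScheme G σ)
    (A L D : Matrix (Fin p) (Fin p) ℝ) (hA : A.PosDef)
    (hL : LowerUnitri L) (hD : PosDiag D) (hdec : A = L * D * Lᵀ) :
    (memP G σ A ↔ memL G σ L) ∧ (memL G σ L ↔ memL G σ L⁻¹) :=
  statement6_general G σ hhom hσ A L D hA hL hD hdec
end

section
/- Let G = (V,E) be a cycle on 4 vertices or a path on 4 vertices, and let σ be any ordering (bijection onto {1,2,3,4}) of V. Then there exist vertices u,v,w ∈ V such that (u,v) ∈ E, (v,w) ∈ E, (u,w) ∉ E, and either σ(v) < σ(u) < σ(w) or σ(u) < σ(v) < σ(w). -/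
/-!
An induced path `a - b - c` yields the required triple as soon as the middle vertex `b` is
not the latest of the three: put the later endpoint last. In a `4`-cycle or `4`-path
`a - b - c - d`, if `b` comes before `c` use `a - b - c`, otherwise use `b - c - d`.
-/

open Matrix BigOperators

/-- `G` is a cycle graph on its `4` vertices. -/
def IsCycle4 {V : Type*} (G : SimpleGraph V) : Prop :=
  ∃ a b c d : V, a ≠ b ∧ a ≠ c ∧ a ≠ d ∧ b ≠ c ∧ b ≠ d ∧ c ≠ d ∧
    (∀ v : V, v = a ∨ v = b ∨ v = c ∨ v = d) ∧
    G.Adj a b ∧ G.Adj b c ∧ G.Adj c d ∧ G.Adj d a ∧ ¬ G.Adj a c ∧ ¬ G.Adj b d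

/-- `G` is a path graph on its `4` vertices. -/
def IsPath4 {V : Type*} (G : SimpleGraph V) : Prop :=
  ∃ a b c d : V, a ≠ b ∧ a ≠ c ∧ a ≠ d ∧ b ≠ c ∧ b ≠ d ∧ c ≠ d ∧
    (∀ v : V, v = a ∨ v = b ∨ v = c ∨ v = d) ∧
    G.Adj a b ∧ G.Adj b c ∧ G.Adj c d ∧ ¬ G.Adj a c ∧ ¬ G.Adj a d ∧ ¬ G.Adj b d

namespace SimpleGraph

variable {V α : Type*} [LinearOrder α] (G : SimpleGraph V) {f : V → α}

theorem exists_adj_adj_not_adj_of_lt_max (hf : Function.Injective f) {a b c : V}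
    (hab : G.Adj a b) (hbc : G.Adj b c) (hnac : ¬ G.Adj a c) (hac : a ≠ c)
    (hb : f b < f a ∨ f b < f c) :
    ∃ u v w : V, G.Adj u v ∧ G.Adj v w ∧ ¬ G.Adj u w ∧
      ((f v < f u ∧ f u < f w) ∨ (f u < f v ∧ f v < f w)) := by
  have hfab : f a ≠ f b := hf.ne (G.ne_of_adj hab)
  have hfcb : f c ≠ f b := hf.ne (G.ne_of_adj hbc.symm)
  rcases (hf.ne hac).lt_or_gt with hlt | hgt
  · refine ⟨a, b, c, hab, hbc, hnac, ?_⟩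
    rcases hfab.lt_or_gt with h | h
    · exact Or.inr ⟨h, hb.resolve_left (lt_asymm h)⟩
    · exact Or.inl ⟨h, hlt⟩
  · refine ⟨c, b, a, hbc.symm, hab.symm, fun h => hnac h.symm, ?_⟩
    rcases hfcb.lt_or_gt with h | h
    · exact Or.inr ⟨h, hb.resolve_right (lt_asymm h)⟩
    · exact Or.inl ⟨h, hgt⟩

theorem exists_adj_adj_not_adj_of_path4 (hf : Function.Injective f) {a b c d : V}
    (hab : G.Adj a b) (hbc : G.Adj b c) (hcd : G.Adj c d)
    (hnac : ¬ G.Adj a c) (hnbd : ¬ G.Adj b d) (hac : a ≠ c) (hbd : b ≠ d) :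
    ∃ u v w : V, G.Adj u v ∧ G.Adj v w ∧ ¬ G.Adj u w ∧
      ((f v < f u ∧ f u < f w) ∨ (f u < f v ∧ f v < f w)) := by
  rcases (hf.ne (G.ne_of_adj hbc)).lt_or_gt with hlt | hgt
  · exact G.exists_adj_adj_not_adj_of_lt_max hf hab hbc hnac hac (Or.inr hlt)
  · exact G.exists_adj_adj_not_adj_of_lt_max hf hbc hcd hnbd hbd (Or.inl hgt)

end SimpleGraph

/-- Lemma 4 of the paper: in a `4`-cycle or `4`-path, for any ordering `σ` there are
vertices `u, v, w` with `(u,v), (v,w) ∈ E`, `(u,w) ∉ E`, and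
`σ(v) < σ(u) < σ(w)` or `σ(u) < σ(v) < σ(w)`. -/
theorem statement9 {V : Type*} (G : SimpleGraph V) (σ : V ≃ Fin 4)
    (hG : IsCycle4 G ∨ IsPath4 G) :
    ∃ u v w : V, G.Adj u v ∧ G.Adj v w ∧ ¬ G.Adj u w ∧
      ((σ v < σ u ∧ σ u < σ w) ∨ (σ u < σ v ∧ σ v < σ w)) := by
  rcases hG with ⟨a, b, c, d, -, hac, -, -, hbd, -, -, hab, hbc, hcd, -, hnac, hnbd⟩ |
    ⟨a, b, c, d, -, hac, -, -, hbd, -, -, hab, hbc, hcd, hnac, -, hnbd⟩ <;>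
  exact G.exists_adj_adj_not_adj_of_path4 σ.injective hab hbc hcd hnac hnbd hac hbd
end

section
/- A finite simple graph G = (V,E) is homogeneous (i.e., for every edge (v,v') ∈ E, either N[v'] ⊆ N[v] or N[v] ⊆ N[v']) if and only if G is decomposable (chordal, containing no induced cycle of length ≥ 4) and contains no induced path on 4 vertices. -/
open Matrix BigOperators

/-- The four vertices `a, b, c, d` induce a `P₄` or a `C₄` traversed in this order. -/
def InducesPathOrCycle4 {V : Type*} (G : SimpleGraph V) (a b c d : V) : Prop :=
  G.Adj a b ∧ G.Adj b c ∧ G.Adj c d ∧ a ≠ c ∧ b ≠ d ∧ ¬ G.Adj a c ∧ ¬ G.Adj b d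

section

variable {V : Type*} {G : SimpleGraph V}

/-- In such a quadruple, `a` lies in `N[b] \ N[c]` and `d` in `N[c] \ N[b]`, so the closed
neighbourhoods of the edge `bc` are not nested; conversely, private neighbours of the two
ends of an edge produce such a quadruple. -/
theorem homogeneous_iff_forall_not_inducesPathOrCycle4 :
    Homogeneous G ↔ ∀ a b c d : V, ¬ InducesPathOrCycle4 G a b c d := by
  constructor
  · rintro h a b c d ⟨hab, hbc, hcd, hac, hbd, hnac, hnbd⟩
    rcases h b c hbc with hsub | hsub
    · rcases hsub (Or.inr hcd.symm) with rfl | hdb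
      exacts [hbd rfl, hnbd hdb.symm]
    · rcases hsub (Or.inr hab) with rfl | hac'
      exacts [hac rfl, hnac hac']
  · intro h v v' hvv'
    by_contra! hcon
    obtain ⟨⟨a, ha, ha'⟩, ⟨b, hb, hb'⟩⟩ := And.imp Set.not_subset.mp Set.not_subset.mp hcon
    simp only [cNbhd, Set.mem_ofPred_eq, not_or] at ha ha' hb hb'
    have hav' : G.Adj a v' := ha.resolve_left fun h => ha'.2 (h ▸ hvv'.symm)
    have hbv : G.Adj b v := hb.resolve_left fun h => hb'.2 (h ▸ hvv')
    exact h a v' v b ⟨hav', hvv'.symm, hbv.symm, ha'.1, hb'.1 ∘ Eq.symm, ha'.2,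
      fun h => hb'.2 h.symm⟩

theorem HasInducedPath4.exists_inducesPathOrCycle4 (h : HasInducedPath4 G) :
    ∃ a b c d : V, InducesPathOrCycle4 G a b c d := by
  obtain ⟨a, b, c, d, -, hac, -, -, hbd, -, hab, hbc, hcd, hnac, -, hnbd⟩ := h
  exact ⟨a, b, c, d, hab, hbc, hcd, hac, hbd, hnac, hnbd⟩

theorem InducesPathOrCycle4.hasInducedPath4_or_hasInducedCycle4 {a b c d : V}
    (h : InducesPathOrCycle4 G a b c d) : HasInducedPath4 G ∨ HasInducedCycle4 G := by
  obtain ⟨hab, hbc, hcd, hac, hbd, hnac, hnbd⟩ := h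
  have had : a ≠ d := by rintro rfl; exact hnbd hab.symm
  by_cases hda : G.Adj d a
  · exact .inr ⟨a, b, c, d, hab.ne, hac, had, hbc.ne, hbd, hcd.ne, hab, hbc, hcd, hda, hnac, hnbd⟩
  · exact .inl ⟨a, b, c, d, hab.ne, hac, had, hbc.ne, hbd, hcd.ne, hab, hbc, hcd, hnac,
      fun h => hda h.symm, hnbd⟩

theorem HasInducedCycle4.hasInducedCycleGE4 (h : HasInducedCycle4 G) : HasInducedCycleGE4 G := by
  obtain ⟨a, b, c, d, hab, hac, had, hbc, hbd, hcd, eab, ebc, ecd, eda, hnac, hnbd⟩ := h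
  refine ⟨4, ![a, b, c, d], le_rfl, ?_, ?_⟩
  · intro i j hij
    fin_cases i <;> fin_cases j <;> simp_all [eq_comm]
  · intro i j
    have hnca : ¬ G.Adj c a := fun h => hnac h.symm
    have hndb : ¬ G.Adj d b := fun h => hnbd h.symm
    fin_cases i <;> fin_cases j <;> simp [*, eab.symm, ebc.symm, ecd.symm, eda.symm]

/-- The first four vertices of an induced cycle of length at least `4`. -/
theorem HasInducedCycleGE4.exists_inducesPathOrCycle4 (h : HasInducedCycleGE4 G) :
    ∃ a b c d : V, InducesPathOrCycle4 G a b c d := by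
  obtain ⟨n, f, hn, hinj, hadj⟩ := h
  have h1 : 1 % n = 1 := Nat.mod_eq_of_lt (by omega)
  have h2 : 2 % n = 2 := Nat.mod_eq_of_lt (by omega)
  have h3 : 3 % n = 3 := Nat.mod_eq_of_lt (by omega)
  have h4 : 4 % n ≠ 1 := by
    rcases hn.eq_or_lt with rfl | hn5
    · decide
    · rw [Nat.mod_eq_of_lt hn5]; decide
  refine ⟨f ⟨0, by omega⟩, f ⟨1, by omega⟩, f ⟨2, by omega⟩, f ⟨3, by omega⟩, ?_, ?_, ?_,
    ?_, ?_, ?_, ?_⟩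
  all_goals first
    | (intro e; have := congrArg Fin.val (hinj e); simp at this)
    | (rw [hadj]; simp [h1, h2, h3, h4])

end

theorem statement11_general {V : Type*} (G : SimpleGraph V) :
    Homogeneous G ↔ (Decomposable G ∧ ¬ HasInducedPath4 G) := by
  rw [homogeneous_iff_forall_not_inducesPathOrCycle4]
  constructor
  · intro h
    refine ⟨fun hc => ?_, fun hp => ?_⟩
    · obtain ⟨a, b, c, d, habcd⟩ := hc.exists_inducesPathOrCycle4
      exact h a b c d habcd
    · obtain ⟨a, b, c, d, habcd⟩ := hp.exists_inducesPathOrCycle4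
      exact h a b c d habcd
  · rintro ⟨hdec, hp⟩ a b c d habcd
    rcases habcd.hasInducedPath4_or_hasInducedCycle4 with hp' | hc
    exacts [hp hp', hdec hc.hasInducedCycleGE4]

/-- A finite simple graph is homogeneous iff it is decomposable (chordal) and has no
induced path on `4` vertices. -/
theorem statement11 {V : Type*} [Fintype V] (G : SimpleGraph V) :
    Homogeneous G ↔ (Decomposable G ∧ ¬ HasInducedPath4 G) :=
  statement11_general G
end

section
/- Let G = (V,E) be a homogeneous graph on p vertices, and let σ be a Hasse tree based elimination scheme for G. Then σ is a perfect vertex elimination scheme for G. -/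
open Matrix BigOperators

theorem cNbhd_subset_of_adj_of_lt {V : Type*} {p : ℕ} {G : SimpleGraph V} {σ : V ≃ Fin p}
    (hhom : Homogeneous G) (hσ : HasseElimScheme G σ) {a b : V} (hab : G.Adj a b)
    (hlt : σ a < σ b) : cNbhd G a ⊆ cNbhd G b := by
  refine (hhom a b hab).elim (fun hba => ?_) id
  by_contra hne
  exact (hσ a b hba fun h => hne h.le).asymm hlt

theorem statement12_general {V : Type*} {p : ℕ} (G : SimpleGraph V) (σ : V ≃ Fin p)
    (hhom : Homogeneous G) (hσ : HasseElimScheme G σ) :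
    PerfectElimScheme G σ := by
  intro i j k hij hjk hji hki
  have hsub : cNbhd G (σ.symm i) ⊆ cNbhd G (σ.symm j) :=
    cNbhd_subset_of_adj_of_lt hhom hσ hji.symm (by simpa using hij)
  rcases hsub (Or.inr hki : σ.symm k ∈ cNbhd G (σ.symm i)) with hkj | hkj
  · exact absurd (σ.symm.injective hkj) hjk.ne'
  · exact hkj

/-- A Hasse tree based elimination scheme for a homogeneous graph is a perfect
vertex elimination scheme. -/
theorem statement12 {V : Type*} [Fintype V] {p : ℕ} (G : SimpleGraph V) (σ : V ≃ Fin p)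
    (hhom : Homogeneous G) (hσ : HasseElimScheme G σ) :
    PerfectElimScheme G σ :=
  statement12_general G σ hhom hσ
end

section
/- Let G = (V,E) be a finite simple graph with |V| = m and σ an ordering of V, and suppose that for every m×m diagonal matrix D with positive diagonal entries and every m×m lower triangular matrix L with unit diagonal, L ∈ 𝓛_{G_σ} ⇔ L⁻¹ ∈ 𝓛_{G_σ} ⇔ LDLᵀ ∈ P_{G_σ}. Let G' be the induced subgraph of G on V ∖ {σ⁻¹(m)} and let σ' be the restriction of σ to V ∖ {σ⁻¹(m)} (an ordering of the m−1 remaining vertices). Then for every (m−1)×(m−1) diagonal matrix D* with positive diagonal entries and every (m−1)×(m−1) lower triangular matrix L* with unit diagonal, L* ∈ 𝓛_{G'_{σ'}} ⇔ (L*)⁻¹ ∈ 𝓛_{G'_{σ'}} ⇔ L*D*(L*)ᵀ ∈ P_{G'_{σ'}}. -/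
open Matrix BigOperators

/-! Bordering a `p × p` matrix `A` by a `1` in a new last diagonal entry, `diag(A, 1)`, commutes
with products, transposes and inverses and preserves unit lower triangularity, positive diagonals
and positive definiteness. Since the deleted vertex carries the last label, the zero pattern of
`diag(A, 1)` relative to `(G, σ)` is exactly that of `A` relative to `(G', σ')`. Applying the
hypothesis to `diag(L*, 1)` and `diag(D*, 1)` therefore gives the claim for `L*` and `D*`. -/

namespace Matrix

open scoped ComplexOrder

variable {α : Type*} {p : ℕ}

def extendByOne [Zero α] [One α] (A : Matrix (Fin p) (Fin p) α) :
    Matrix (Fin (p + 1)) (Fin (p + 1)) α :=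
  reindex finSumFinEquiv finSumFinEquiv (fromBlocks A 0 0 1)

section Entries

variable [Zero α] [One α] (A : Matrix (Fin p) (Fin p) α)

@[simp] lemma extendByOne_castSucc_castSucc (i j : Fin p) :
    extendByOne A i.castSucc j.castSucc = A i j := by
  simp [extendByOne]

@[simp] lemma extendByOne_castSucc_last (i : Fin p) :
    extendByOne A i.castSucc (Fin.last p) = 0 := by
  simp [extendByOne]

@[simp] lemma extendByOne_last_castSucc (j : Fin p) :
    extendByOne A (Fin.last p) j.castSucc = 0 := by
  simp [extendByOne]

@[simp] lemma extendByOne_last_last : extendByOne A (Fin.last p) (Fin.last p) = 1 := by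
  simp [extendByOne]

lemma submatrix_castSucc_extendByOne :
    (extendByOne A).submatrix Fin.castSucc Fin.castSucc = A := by
  ext i j
  simp

lemma extendByOne_eq_zero_of_ne {P : Fin (p + 1) → Fin (p + 1) → Prop}
    (hA : ∀ i j, i ≠ j → P i.castSucc j.castSucc → A i j = 0)
    {i j : Fin (p + 1)} (hij : i ≠ j) (hP : P i j) : extendByOne A i j = 0 := by
  induction i using Fin.lastCases with
  | last => induction j using Fin.lastCases with
    | last => exact absurd rfl hij
    | cast j => simp
  | cast i => induction j using Fin.lastCases with
    | last => simp
    | cast j => simpa using hA i j (fun h => hij (h ▸ rfl)) hP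

lemma extendByOne_diag_mem {s : Set α} (h1 : (1 : α) ∈ s) (hA : ∀ i, A i i ∈ s)
    (i : Fin (p + 1)) : extendByOne A i i ∈ s := by
  induction i using Fin.lastCases with
  | last => simpa using h1
  | cast i => simpa using hA i

lemma extendByOne_transpose : (extendByOne A)ᵀ = extendByOne Aᵀ := by
  simp [extendByOne, fromBlocks_transpose]

end Entries

lemma extendByOne_mul [Semiring α] (A B : Matrix (Fin p) (Fin p) α) :
    extendByOne A * extendByOne B = extendByOne (A * B) := by
  simp [extendByOne, fromBlocks_multiply]

lemma extendByOne_one [Semiring α] : extendByOne (1 : Matrix (Fin p) (Fin p) α) = 1 := by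
  simp [extendByOne, fromBlocks_one]

lemma extendByOne_inv [CommRing α] {A : Matrix (Fin p) (Fin p) α} (hA : IsUnit A.det) :
    (extendByOne A)⁻¹ = extendByOne A⁻¹ :=
  inv_eq_right_inv (by rw [extendByOne_mul, mul_nonsing_inv A hA, extendByOne_one])

lemma PosDef.fromBlocks_zero {𝕜 m n : Type*} [RCLike 𝕜] [Fintype m] [Fintype n]
    [DecidableEq m] [DecidableEq n] {A : Matrix m m 𝕜} {D : Matrix n n 𝕜}
    (hA : A.PosDef) (hD : D.PosDef) : (fromBlocks A 0 0 D).PosDef := by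
  have : Invertible A := hA.isUnit.invertible
  have hsemi : (fromBlocks A 0 0 D).PosSemidef := by
    simpa using (PosDef.fromBlocks₁₁ (0 : Matrix m n 𝕜) D hA).2 (by simpa using hD.posSemidef)
  refine hsemi.posDef_iff_det_ne_zero.2 ?_
  rw [det_fromBlocks_zero₂₁]
  exact mul_ne_zero ((isUnit_iff_isUnit_det A).1 hA.isUnit).ne_zero
    ((isUnit_iff_isUnit_det D).1 hD.isUnit).ne_zero

lemma posDef_extendByOne_iff {𝕜 : Type*} [RCLike 𝕜] {A : Matrix (Fin p) (Fin p) 𝕜} :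
    (extendByOne A).PosDef ↔ A.PosDef := by
  refine ⟨fun h => ?_, fun h => ?_⟩
  · simpa [submatrix_castSucc_extendByOne] using h.submatrix (Fin.castSucc_injective p)
  · exact (h.fromBlocks_zero PosDef.one).submatrix finSumFinEquiv.symm.injective

end Matrix

open Matrix

section Bordering

variable {V W : Type*} {p : ℕ}

lemma LowerUnitri.det_eq_one {L : Matrix (Fin p) (Fin p) ℝ} (hL : LowerUnitri L) : L.det = 1 := by
  rw [det_of_isLowerTriangular L hL.2]
  simp [hL.1]

lemma LowerUnitri.extendByOne {L : Matrix (Fin p) (Fin p) ℝ} (hL : LowerUnitri L) :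
    LowerUnitri (extendByOne L) :=
  ⟨extendByOne_diag_mem L (s := {1}) rfl hL.1,
    fun _ _ hij => extendByOne_eq_zero_of_ne L (P := (· < ·))
      (fun i j _ h => hL.2 i j (Fin.castSucc_lt_castSucc_iff.1 h)) hij.ne hij⟩

lemma PosDiag.extendByOne {D : Matrix (Fin p) (Fin p) ℝ} (hD : PosDiag D) :
    PosDiag (extendByOne D) :=
  ⟨fun _ _ hij => extendByOne_eq_zero_of_ne D (P := fun _ _ => True)
      (fun i j h _ => hD.1 i j h) hij trivial,
    extendByOne_diag_mem D (s := Set.Ioi 0) (Set.mem_Ioi.2 one_pos) hD.2⟩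

lemma coe_symm_apply_eq_symm_castSucc {s : Set V} (σ : V ≃ Fin (p + 1))
    (σ' : s ≃ Fin p) (hσ' : ∀ u : s, ((σ' u : Fin p) : ℕ) = ((σ u.val : Fin (p + 1)) : ℕ))
    (i : Fin p) : (σ'.symm i : V) = σ.symm i.castSucc := by
  apply σ.injective
  ext
  rw [σ.apply_symm_apply, Fin.val_castSucc, ← hσ', σ'.apply_symm_apply]

lemma induce_adj_symm_iff {G : SimpleGraph V} {s : Set V}
    (σ : V ≃ Fin (p + 1)) (σ' : s ≃ Fin p)
    (hσ' : ∀ u : s, ((σ' u : Fin p) : ℕ) = ((σ u.val : Fin (p + 1)) : ℕ)) (i j : Fin p) :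
    (G.induce s).Adj (σ'.symm i) (σ'.symm j) ↔
      G.Adj (σ.symm i.castSucc) (σ.symm j.castSucc) := by
  simp [coe_symm_apply_eq_symm_castSucc σ σ' hσ']

variable {G : SimpleGraph V} {σ : V ≃ Fin (p + 1)} {G' : SimpleGraph W} {σ' : W ≃ Fin p}

lemma memL_extendByOne_iff
    (hadj : ∀ i j, G'.Adj (σ'.symm i) (σ'.symm j) ↔ G.Adj (σ.symm i.castSucc) (σ.symm j.castSucc))
    {A : Matrix (Fin p) (Fin p) ℝ} : memL G σ (extendByOne A) ↔ memL G' σ' A := by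
  refine ⟨fun h => ⟨fun i => by simpa using h.1 i.castSucc, fun i j hij hc => ?_⟩,
    fun h => ⟨extendByOne_diag_mem A (s := {1}) rfl h.1, fun i j hij hc => ?_⟩⟩
  · simpa using h.2 _ _ ((Fin.castSucc_injective p).ne hij) (by simpa [hadj] using hc)
  · exact extendByOne_eq_zero_of_ne A (P := fun i j => i < j ∨ ¬ G.Adj (σ.symm i) (σ.symm j))
      (fun i j hij hc => h.2 i j hij (by simpa [hadj] using hc)) hij hc

lemma memP_extendByOne_iff
    (hadj : ∀ i j, G'.Adj (σ'.symm i) (σ'.symm j) ↔ G.Adj (σ.symm i.castSucc) (σ.symm j.castSucc))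
    {A : Matrix (Fin p) (Fin p) ℝ} : memP G σ (extendByOne A) ↔ memP G' σ' A := by
  refine ⟨fun h => ⟨posDef_extendByOne_iff.1 h.1, fun i j hij hc => ?_⟩,
    fun h => ⟨posDef_extendByOne_iff.2 h.1, fun i j hij hc => ?_⟩⟩
  · simpa using h.2 _ _ ((Fin.castSucc_injective p).ne hij) (by simpa [hadj] using hc)
  · exact extendByOne_eq_zero_of_ne A (P := fun i j => ¬ G.Adj (σ.symm i) (σ.symm j))
      (fun i j hij hc => h.2 i j hij (by simpa [hadj] using hc)) hij hc

end Bordering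

theorem statement13_general {V : Type*} {p : ℕ} (G : SimpleGraph V)
    (σ : V ≃ Fin (p + 1))
    (H : ∀ D : Matrix (Fin (p + 1)) (Fin (p + 1)) ℝ, PosDiag D →
      ∀ L : Matrix (Fin (p + 1)) (Fin (p + 1)) ℝ, LowerUnitri L →
        ((memL G σ L ↔ memL G σ L⁻¹) ∧ (memL G σ L ↔ memP G σ (L * D * Lᵀ))))
    (σ' : ↥{v : V | v ≠ σ.symm (Fin.last p)} ≃ Fin p)
    (hσ' : ∀ u : ↥{v : V | v ≠ σ.symm (Fin.last p)},
      ((σ' u : Fin p) : ℕ) = ((σ u.val : Fin (p + 1)) : ℕ)) :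
    ∀ D' : Matrix (Fin p) (Fin p) ℝ, PosDiag D' →
      ∀ L' : Matrix (Fin p) (Fin p) ℝ, LowerUnitri L' →
        ((memL (G.induce {v : V | v ≠ σ.symm (Fin.last p)}) σ' L' ↔
            memL (G.induce {v : V | v ≠ σ.symm (Fin.last p)}) σ' L'⁻¹) ∧
          (memL (G.induce {v : V | v ≠ σ.symm (Fin.last p)}) σ' L' ↔
            memP (G.induce {v : V | v ≠ σ.symm (Fin.last p)}) σ' (L' * D' * L'ᵀ))) := by
  intro D' hD' L' hL'
  have hadj := induce_adj_symm_iff (G := G) σ σ' hσ'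
  have hdet : IsUnit L'.det := hL'.det_eq_one ▸ isUnit_one
  obtain ⟨hinv, hconj⟩ := H _ hD'.extendByOne _ hL'.extendByOne
  rw [extendByOne_inv hdet, memL_extendByOne_iff hadj, memL_extendByOne_iff hadj] at hinv
  rw [extendByOne_transpose, extendByOne_mul, extendByOne_mul, memL_extendByOne_iff hadj,
    memP_extendByOne_iff hadj] at hconj
  exact ⟨hinv, hconj⟩

/-- Claim 2 of Proposition 1: if the zero-preservation equivalences hold for
`(G, σ)` on `m = p + 1` vertices, they also hold for the induced subgraph `G'`
obtained by deleting the vertex `σ⁻¹(m)` with the highest label, together with the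
restricted ordering `σ'`. -/
theorem statement13 {V : Type*} [Fintype V] {p : ℕ} (G : SimpleGraph V)
    (σ : V ≃ Fin (p + 1))
    (H : ∀ D : Matrix (Fin (p + 1)) (Fin (p + 1)) ℝ, PosDiag D →
      ∀ L : Matrix (Fin (p + 1)) (Fin (p + 1)) ℝ, LowerUnitri L →
        ((memL G σ L ↔ memL G σ L⁻¹) ∧ (memL G σ L ↔ memP G σ (L * D * Lᵀ))))
    (σ' : ↥{v : V | v ≠ σ.symm (Fin.last p)} ≃ Fin p)
    (hσ' : ∀ u : ↥{v : V | v ≠ σ.symm (Fin.last p)},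
      ((σ' u : Fin p) : ℕ) = ((σ u.val : Fin (p + 1)) : ℕ)) :
    ∀ D' : Matrix (Fin p) (Fin p) ℝ, PosDiag D' →
      ∀ L' : Matrix (Fin p) (Fin p) ℝ, LowerUnitri L' →
        ((memL (G.induce {v : V | v ≠ σ.symm (Fin.last p)}) σ' L' ↔
            memL (G.induce {v : V | v ≠ σ.symm (Fin.last p)}) σ' L'⁻¹) ∧
          (memL (G.induce {v : V | v ≠ σ.symm (Fin.last p)}) σ' L' ↔
            memP (G.induce {v : V | v ≠ σ.symm (Fin.last p)}) σ' (L' * D' * L'ᵀ))) :=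
  statement13_general G σ H σ' hσ'
end

section
/- Let G' = (V', E') be a homogeneous graph, let S ⊆ V' be a union of vertex sets of connected components of G', and let v ∉ V' be a new vertex. Define the graph G on vertex set V' ∪ {v} whose edge set is E' together with the edges (v,u) for every u ∈ S. Then G is a homogeneous graph; in particular, G contains no induced cycle on 4 vertices and no induced path on 4 vertices. -/
open Matrix BigOperators

/-!
The new vertex `v` is either joined to a whole component of `G'` or to none of it. Hence for an
edge `uw` of `G'` with `N'[w] ⊆ N'[u]`, adding `v` keeps `N[w] ⊆ N[u]`, and every neighbour of `v`
has its new closed neighbourhood inside `N[v] = S ∪ {v}`. So the neighbourhoods along every edge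
of `G` stay nested. A nested edge `ab` forbids an induced path `x - a - b - y`, since `y ∈ N[b]`
would force `y ∈ N[a]` (or `x ∈ N[a] ⊆ N[b]`); both `C₄` and `P₄` contain such a path.
-/

namespace Homogeneous

variable {V : Type*} {G : SimpleGraph V}

theorem adj_or_adj_of_adj (hG : Homogeneous G) {x a b y : V} (hxa : G.Adj x a)
    (hab : G.Adj a b) (hyb : G.Adj y b) (hxb : x ≠ b) (hya : y ≠ a) :
    G.Adj x b ∨ G.Adj y a := by
  rcases hG a b hab with hba | hab'
  · exact Or.inr ((hba (Or.inr hyb)).resolve_left hya)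
  · exact Or.inl ((hab' (Or.inr hxa)).resolve_left hxb)

theorem not_hasInducedCycle4 (hG : Homogeneous G) : ¬ HasInducedCycle4 G := by
  rintro ⟨a, b, c, d, -, hac, -, -, hbd, -, hab, hbc, -, hda, hnac, hnbd⟩
  rcases hG.adj_or_adj_of_adj hda hab hbc.symm hbd.symm hac.symm with hdb | hca
  · exact hnbd hdb.symm
  · exact hnac hca.symm

theorem not_hasInducedPath4 (hG : Homogeneous G) : ¬ HasInducedPath4 G := by
  rintro ⟨a, b, c, d, -, hac, -, -, hbd, -, hab, hbc, hcd, hnac, -, hnbd⟩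
  rcases hG.adj_or_adj_of_adj hab hbc hcd.symm hac hbd.symm with hac' | hdb
  · exact hnac hac'
  · exact hnbd hdb.symm

end Homogeneous

def IsVertexExtension {V : Type*} (G' : SimpleGraph V) (S : Set V)
    (G : SimpleGraph (Option V)) : Prop :=
  ∀ x y : Option V, G.Adj x y ↔
    ((∃ u w : V, x = some u ∧ y = some w ∧ G'.Adj u w) ∨
     (x = none ∧ ∃ u ∈ S, y = some u) ∨
     (y = none ∧ ∃ u ∈ S, x = some u))

namespace IsVertexExtension

variable {V : Type*} {G' : SimpleGraph V} {S : Set V} {G : SimpleGraph (Option V)}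

theorem adj_some_some (hG : IsVertexExtension G' S G) {u w : V} :
    G.Adj (some u) (some w) ↔ G'.Adj u w := by
  simp [hG (some u) (some w)]

theorem adj_none_some (hG : IsVertexExtension G' S G) {u : V} :
    G.Adj none (some u) ↔ u ∈ S := by
  simp [hG none (some u)]

theorem some_mem_cNbhd_some (hG : IsVertexExtension G' S G) {a w : V} :
    some a ∈ cNbhd G (some w) ↔ a ∈ cNbhd G' w := by
  simp only [cNbhd, Set.mem_ofPred_eq, Option.some.injEq, hG.adj_some_some]

theorem none_mem_cNbhd_some (hG : IsVertexExtension G' S G) {w : V} :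
    none ∈ cNbhd G (some w) ↔ w ∈ S := by
  simp only [cNbhd, Set.mem_ofPred_eq, reduceCtorEq, false_or, hG.adj_none_some]

theorem some_mem_cNbhd_none (hG : IsVertexExtension G' S G) {a : V} :
    some a ∈ cNbhd G none ↔ a ∈ S := by
  simp only [cNbhd, Set.mem_ofPred_eq, reduceCtorEq, false_or, G.adj_comm, hG.adj_none_some]

theorem cNbhd_some_subset_cNbhd_some (hG : IsVertexExtension G' S G)
    (hS : ∀ u v : V, G'.Adj u v → (u ∈ S ↔ v ∈ S)) {u w : V} (huw : G'.Adj u w)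
    (hsub : cNbhd G' w ⊆ cNbhd G' u) : cNbhd G (some w) ⊆ cNbhd G (some u) := by
  rintro (_ | a)
  · simpa only [hG.none_mem_cNbhd_some] using (hS u w huw).2
  · simpa only [hG.some_mem_cNbhd_some] using @hsub a

theorem cNbhd_some_subset_cNbhd_none (hG : IsVertexExtension G' S G)
    (hS : ∀ u v : V, G'.Adj u v → (u ∈ S ↔ v ∈ S)) {w : V} (hw : w ∈ S) :
    cNbhd G (some w) ⊆ cNbhd G none := by
  rintro (_ | a) ha
  · exact Or.inl rfl
  · rw [hG.some_mem_cNbhd_some] at ha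
    rw [hG.some_mem_cNbhd_none]
    rcases ha with rfl | haw
    · exact hw
    · exact (hS a w haw).2 hw

theorem homogeneous (hG : IsVertexExtension G' S G)
    (hS : ∀ u v : V, G'.Adj u v → (u ∈ S ↔ v ∈ S)) (hG' : Homogeneous G') :
    Homogeneous G := by
  intro x y hxy
  rcases (hG x y).1 hxy with ⟨u, w, rfl, rfl, huw⟩ | ⟨rfl, u, hu, rfl⟩ | ⟨rfl, u, hu, rfl⟩
  · exact (hG' u w huw).imp (hG.cNbhd_some_subset_cNbhd_some hS huw)
      (hG.cNbhd_some_subset_cNbhd_some hS huw.symm)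
  · exact Or.inl (hG.cNbhd_some_subset_cNbhd_none hS hu)
  · exact Or.inr (hG.cNbhd_some_subset_cNbhd_none hS hu)

end IsVertexExtension

theorem statement15_general {V' : Type*} (G' : SimpleGraph V') (S : Set V')
    (hS : ∀ u v : V', G'.Adj u v → (u ∈ S ↔ v ∈ S))
    (hG' : Homogeneous G')
    (G : SimpleGraph (Option V'))
    (hG : ∀ x y : Option V', G.Adj x y ↔
      ((∃ u w : V', x = some u ∧ y = some w ∧ G'.Adj u w) ∨
       (x = none ∧ ∃ u ∈ S, y = some u) ∨
       (y = none ∧ ∃ u ∈ S, x = some u))) :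
    Homogeneous G ∧ ¬ HasInducedCycle4 G ∧ ¬ HasInducedPath4 G := by
  have hHom : Homogeneous G := IsVertexExtension.homogeneous hG hS hG'
  exact ⟨hHom, hHom.not_hasInducedCycle4, hHom.not_hasInducedPath4⟩

/-- Adding a new vertex joined to a union of connected components of a homogeneous
graph yields a homogeneous graph; in particular, the new graph has no induced
`4`-cycle and no induced `4`-path.  The new vertex is modeled as `none : Option V'`. -/
theorem statement15 {V' : Type*} [Fintype V'] (G' : SimpleGraph V') (S : Set V')
    (hS : ∀ u v : V', G'.Adj u v → (u ∈ S ↔ v ∈ S))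
    (hG' : Homogeneous G')
    (G : SimpleGraph (Option V'))
    (hG : ∀ x y : Option V', G.Adj x y ↔
      ((∃ u w : V', x = some u ∧ y = some w ∧ G'.Adj u w) ∨
       (x = none ∧ ∃ u ∈ S, y = some u) ∨
       (y = none ∧ ∃ u ∈ S, x = some u))) :
    Homogeneous G ∧ ¬ HasInducedCycle4 G ∧ ¬ HasInducedPath4 G :=
  statement15_general G' S hS hG' G hG
end
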